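/- arXiv:1702.00847 — 2 statements merged into one kernel-verified Lean document; each statement's English description precedes it below -/
import Mathlib

section
/- Let C be a propositional clause blocked by a literal L in a CNF formula F, meaning C contains L exactly once and every binary resolvent of C upon L with a clause from F \ {C} is a tautology. Then F \ {C} is satisfiable if and only if F ∪ {C} is satisfiable. -/
/-- A propositional literal: an atom together with a polarity. -/
abbrev PLit (α : Type) := α × Bool

/-- The complement of a literal. -/
def PLit.compl {α : Type} (l : PLit α) : PLit α := (l.1, !l.2)

/-- A propositional clause is a (finite) set of literals. -/
abbrev PClause (α : Type) := Finset (PLit α)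

/-- A literal is true under an assignment. -/
def plitTrue {α : Type} (v : α → Bool) (l : PLit α) : Prop := v l.1 = l.2

/-- An assignment satisfies a clause if it makes some literal true. -/
def psat {α : Type} (v : α → Bool) (C : PClause α) : Prop := ∃ l ∈ C, plitTrue v l

/-- A clause is a tautology if it contains a complementary pair of literals. -/
def ptaut {α : Type} (C : PClause α) : Prop := ∃ l ∈ C, PLit.compl l ∈ C

/-- Flip the truth value of the atom `a`. -/
def pflip {α : Type} [DecidableEq α] (v : α → Bool) (a : α) : α → Bool :=
  fun b => if b = a then !(v b) else v b

/-!
If `v` satisfies `F \ {C}` but not `C`, flip the atom of `L`. The new assignment satisfies `C`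
through `L` and still falsifies the rest of `C`. A clause `D` of `F` without `L.compl` keeps its
true literal, whose atom is not that of `L`. If `L.compl ∈ D`, the resolvent
`C.erase L ∪ D.erase L.compl` is a tautology, hence true under every assignment; its part coming
from `C` is false after the flip, so its part coming from `D` is true.
-/

namespace PLit

variable {α : Type}

theorem fst_ne_of_ne_of_ne_compl {l L : PLit α} (h : l ≠ L) (hc : l ≠ L.compl) : l.1 ≠ L.1 := by
  obtain ⟨a, b⟩ := l
  obtain ⟨a', b'⟩ := L
  rintro rfl
  cases b <;> cases b' <;> simp_all [compl]

end PLit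

section Semantics

variable {α : Type}

theorem plitTrue_compl {v : α → Bool} {l : PLit α} : plitTrue v l.compl ↔ ¬ plitTrue v l := by
  simp [plitTrue, PLit.compl, Bool.eq_not]

theorem psat_of_ptaut (v : α → Bool) {C : PClause α} (h : ptaut C) : psat v C := by
  obtain ⟨l, hl, hlc⟩ := h
  by_cases hv : plitTrue v l
  · exact ⟨l, hl, hv⟩
  · exact ⟨l.compl, hlc, plitTrue_compl.mpr hv⟩

theorem psat_mono {v : α → Bool} {C D : PClause α} (hCD : C ⊆ D) (h : psat v C) : psat v D :=
  let ⟨l, hl, hv⟩ := h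
  ⟨l, hCD hl, hv⟩

theorem psat_union {v : α → Bool} [DecidableEq α] {C D : PClause α} :
    psat v (C ∪ D) ↔ psat v C ∨ psat v D := by
  simp only [psat, Finset.mem_union, or_and_right, exists_or]

theorem not_psat_iff {v : α → Bool} {C : PClause α} : ¬ psat v C ↔ ∀ l ∈ C, ¬ plitTrue v l := by
  simp [psat]

end Semantics

section Flip

variable {α : Type} [DecidableEq α]

theorem plitTrue_pflip_fst {v : α → Bool} {l : PLit α} :
    plitTrue (pflip v l.1) l ↔ ¬ plitTrue v l := by
  simp [plitTrue, pflip, Bool.eq_not]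

theorem plitTrue_pflip_of_ne {v : α → Bool} {l L : PLit α} (h : l ≠ L) (hc : l ≠ L.compl) :
    plitTrue (pflip v L.1) l ↔ plitTrue v l := by
  simp [plitTrue, pflip, PLit.fst_ne_of_ne_of_ne_compl h hc]

theorem psat_pflip_of_resolvent_ptaut {v : α → Bool} {C D : PClause α} {L : PLit α}
    (hL : L ∈ C) (hC : ¬ psat v C) (hD : psat v D)
    (hres : L.compl ∈ D → ptaut (C.erase L ∪ D.erase L.compl)) :
    psat (pflip v L.1) D := by
  have hvC := not_psat_iff.mp hC
  have hvL : ¬ plitTrue v L := hvC L hL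
  by_cases hLD : L.compl ∈ D
  · have hwC : ¬ psat (pflip v L.1) (C.erase L) := by
      refine not_psat_iff.mpr fun m hm => ?_
      obtain ⟨hmL, hmC⟩ := Finset.mem_erase.mp hm
      have hmLc : m ≠ L.compl := by
        rintro rfl
        exact hvC _ hmC (plitTrue_compl.mpr hvL)
      rw [plitTrue_pflip_of_ne hmL hmLc]
      exact hvC m hmC
    have hwres := psat_union.mp (psat_of_ptaut (pflip v L.1) (hres hLD))
    exact psat_mono (Finset.erase_subset _ _) (hwres.resolve_left hwC)
  · obtain ⟨l, hl, hvl⟩ := hD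
    refine ⟨l, hl, (plitTrue_pflip_of_ne ?_ ?_).mpr hvl⟩
    · rintro rfl
      exact hvL hvl
    · rintro rfl
      exact hLD hl

end Flip

/-- A propositional clause blocked by a literal `L` in `F` is redundant:
`F \ {C}` is satisfiable iff `F ∪ {C}` is satisfiable. -/
theorem stmt1 {α : Type} [DecidableEq α] (F : Set (PClause α)) (C : PClause α) (L : PLit α)
    (hL : L ∈ C)
    (hblocked : ∀ D ∈ F, D ≠ C → L.compl ∈ D → ptaut (C.erase L ∪ D.erase L.compl)) :
    (∃ v : α → Bool, ∀ D ∈ F \ {C}, psat v D) ↔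
    (∃ v : α → Bool, ∀ D ∈ F ∪ {C}, psat v D) := by
  constructor
  · rintro ⟨v, hv⟩
    suffices h : ∃ w : α → Bool, psat w C ∧ ∀ D ∈ F \ {C}, psat w D by
      obtain ⟨w, hwC, hw⟩ := h
      refine ⟨w, fun D hD => ?_⟩
      by_cases hDC : D = C
      · exact hDC ▸ hwC
      · exact hw D ⟨hD.resolve_right hDC, hDC⟩
    by_cases hC : psat v C
    · exact ⟨v, hC, hv⟩
    · refine ⟨pflip v L.1, ⟨L, hL, plitTrue_pflip_fst.mpr (not_psat_iff.mp hC L hL)⟩, ?_⟩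
      exact fun D hD => psat_pflip_of_resolvent_ptaut hL hC (hv D hD) (hblocked D hD.1 hD.2)
  · rintro ⟨v, hv⟩
    exact ⟨v, fun D hD => hv D (Or.inl hD.1)⟩
end

section
/- Let C be a first-order clause (without equality) blocked by a literal L in a formula F, i.e., every L-resolvent of C with clauses of F \ {C} is valid. Let α be a propositional assignment on ground atoms falsifying a ground instance Cλ of C. Then the assignment α' obtained from α by flipping the truth value of the ground atom of Lλ satisfies every ground instance of every clause of F \ {C} that α satisfies. -/
/-! Suppose flipping the atom of `Lλ` falsifies a ground instance `Dτ` that `α` satisfies. As `α`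
falsifies `Lλ`, every literal of `Dτ` true under `α` is then the complement of `Lλ`; let `Ns` be
the literals of `D` with this instance and `Dr` the others. The blocking condition makes the
`L`-resolvent of `C` with `D` on `Ns` valid, and so is its ground instance `C'λ ∨ Drτ`. But `α`
falsifies `C'λ` (it falsifies `Cλ`) and every literal of `Drτ`. The mgu the blocking condition
speaks about exists because `λ` and `τ` together unify `L` with the complements of `Ns`. -/

/-- First-order terms over variables `V` and function symbols `Fn`. -/
inductive Term (V Fn : Type) : Type
  | var : V → Term V Fn
  | app : Fn → List (Term V Fn) → Term V Fn

/-- A substitution maps variables to terms. -/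
abbrev Subst (V Fn : Type) := V → Term V Fn

/-- Applying a substitution to a term. -/
def Term.subst {V Fn : Type} (σ : Subst V Fn) : Term V Fn → Term V Fn
  | .var v => σ v
  | .app f ts => .app f (ts.attach.map (fun t => Term.subst σ t.1))
  decreasing_by have := List.sizeOf_lt_of_mem t.2; simp at *; omega

/-- The set of variables occurring in a term. -/
def Term.vars {V Fn : Type} : Term V Fn → Set V
  | .var v => {v}
  | .app _ ts => {x | ∃ t ∈ ts.attach, x ∈ Term.vars t.1}
  decreasing_by have := List.sizeOf_lt_of_mem t.2; simp at *; omega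

/-- A term is ground if it contains no variables. -/
def Term.IsGround {V Fn : Type} (t : Term V Fn) : Prop := t.vars = ∅

/-- Composition of substitutions: `σ.comp γ` is "first σ, then γ". -/
def Subst.comp {V Fn : Type} (σ γ : Subst V Fn) : Subst V Fn :=
  fun v => (σ v).subst γ

/-- An atom: a predicate symbol applied to a list of argument terms. -/
structure Atom (V Fn P : Type) where
  pred : P
  args : List (Term V Fn)

/-- A literal: an atom with a polarity (`true` = positive). -/
structure Lit (V Fn P : Type) where
  pol : Bool
  atom : Atom V Fn P

/-- The complement of a literal. -/
def Lit.compl {V Fn P : Type} (l : Lit V Fn P) : Lit V Fn P := ⟨!l.pol, l.atom⟩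

def Atom.subst {V Fn P : Type} (σ : Subst V Fn) (A : Atom V Fn P) : Atom V Fn P :=
  ⟨A.pred, A.args.map (Term.subst σ)⟩

def Lit.subst {V Fn P : Type} (σ : Subst V Fn) (l : Lit V Fn P) : Lit V Fn P :=
  ⟨l.pol, l.atom.subst σ⟩

/-- A clause is a multiset (disjunction) of literals. -/
abbrev Clause (V Fn P : Type) := Multiset (Lit V Fn P)

def Clause.subst {V Fn P : Type} (σ : Subst V Fn) (C : Clause V Fn P) : Clause V Fn P :=
  C.map (Lit.subst σ)

def Atom.vars {V Fn P : Type} (A : Atom V Fn P) : Set V := {x | ∃ t ∈ A.args, x ∈ t.vars}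
def Lit.vars {V Fn P : Type} (l : Lit V Fn P) : Set V := l.atom.vars
def Clause.vars {V Fn P : Type} (C : Clause V Fn P) : Set V := {x | ∃ l ∈ C, x ∈ l.vars}

/-- A clause is ground if it contains no variables. -/
def Clause.IsGround {V Fn P : Type} (C : Clause V Fn P) : Prop := C.vars = ∅

/-- A substitution `σ` unifies a list of literals if it maps them all to the same literal. -/
def IsUnifier {V Fn P : Type} (σ : Subst V Fn) (ls : List (Lit V Fn P)) : Prop :=
  ∀ l₁ ∈ ls, ∀ l₂ ∈ ls, l₁.subst σ = l₂.subst σ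

/-- A most general unifier: every unifier factors through it. -/
def IsMGU {V Fn P : Type} (σ : Subst V Fn) (ls : List (Lit V Fn P)) : Prop :=
  IsUnifier σ ls ∧ ∀ τ, IsUnifier τ ls → ∃ γ, σ.comp γ = τ

/-- Validity of an equality-free clause: it contains a complementary pair of literals. -/
def Clause.ValidEF {V Fn P : Type} (C : Clause V Fn P) : Prop :=
  ∃ A : Atom V Fn P, (⟨true, A⟩ : Lit V Fn P) ∈ C ∧ (⟨false, A⟩ : Lit V Fn P) ∈ C

/-- `C` (written as `L ∨ C'`) is blocked by `L` in `F`: all `L`-resolvents with clauses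
of `F \ {L ∨ C'}` are valid. -/
def BlockedEF {V Fn P : Type} (L : Lit V Fn P) (C' : Clause V Fn P)
    (F : Set (Clause V Fn P)) : Prop :=
  ∀ D ∈ F, D ≠ L ::ₘ C' → ∀ Ns Drest : Clause V Fn P, Ns + Drest = D → Ns ≠ 0 →
    ∀ σ : Subst V Fn, IsMGU σ (L :: (Ns.map Lit.compl).toList) →
      Clause.ValidEF (C'.subst σ + Drest.subst σ)

/-- A propositional assignment on (ground) atoms. -/
abbrev PAssign (V Fn P : Type) := Atom V Fn P → Bool

def litTrue {V Fn P : Type} (α : PAssign V Fn P) (l : Lit V Fn P) : Prop :=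
  α l.atom = l.pol

/-- Propositional satisfaction of a (ground) clause. -/
def satC {V Fn P : Type} (α : PAssign V Fn P) (C : Clause V Fn P) : Prop :=
  ∃ l ∈ C, litTrue α l

/-- A first-order interpretation. -/
structure Interp (Fn P : Type) : Type 1 where
  dom : Type
  nonempty : Nonempty dom
  fn : Fn → List dom → dom
  pr : P → List dom → Prop

def Term.eval {V Fn P : Type} (I : Interp Fn P) (ρ : V → I.dom) : Term V Fn → I.dom
  | .var v => ρ v
  | .app f ts => I.fn f (ts.attach.map (fun t => Term.eval I ρ t.1))
  decreasing_by have := List.sizeOf_lt_of_mem t.2; simp at *; omega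

def litHolds {V Fn P : Type} (I : Interp Fn P) (ρ : V → I.dom) (l : Lit V Fn P) : Prop :=
  l.pol = true ↔ I.pr l.atom.pred (l.atom.args.map (Term.eval I ρ))

def clauseHolds {V Fn P : Type} (I : Interp Fn P) (ρ : V → I.dom) (C : Clause V Fn P) : Prop :=
  ∃ l ∈ C, litHolds I ρ l

/-- First-order satisfiability of a CNF formula (clauses implicitly universally quantified). -/
def SatEF {V Fn P : Type} (F : Set (Clause V Fn P)) : Prop :=
  ∃ I : Interp Fn P, ∀ C ∈ F, ∀ ρ : V → I.dom, clauseHolds I ρ C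


open Classical in
/-- Flip the truth value of the atom `A0`. -/
noncomputable def flipAtom {V Fn P : Type} (α : PAssign V Fn P) (A0 : Atom V Fn P) :
    PAssign V Fn P :=
  fun A => if A = A0 then !(α A) else α A

namespace Term

variable {V Fn : Type}

theorem ind {motive : Term V Fn → Prop} (var : ∀ v, motive (.var v))
    (app : ∀ f ts, (∀ s ∈ ts, motive s) → motive (.app f ts)) : ∀ t, motive t
  | .var v => var v
  | .app f ts => app f ts fun s _ => ind var app s
  decreasing_by have := List.sizeOf_lt_of_mem ‹s ∈ ts›; simp at *; omega

@[simp] theorem subst_var (σ : Subst V Fn) (v : V) : (Term.var v).subst σ = σ v := by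
  rw [Term.subst]

@[simp] theorem subst_app (σ : Subst V Fn) (f : Fn) (ts : List (Term V Fn)) :
    (Term.app f ts).subst σ = .app f (ts.map (Term.subst σ)) := by
  rw [Term.subst, List.attach_map_val]

@[simp] theorem mem_vars_var {x v : V} : x ∈ (Term.var v : Term V Fn).vars ↔ x = v := by
  rw [Term.vars]; rfl

@[simp] theorem mem_vars_app {x : V} {f : Fn} {ts : List (Term V Fn)} :
    x ∈ (Term.app f ts).vars ↔ ∃ s ∈ ts, x ∈ s.vars := by
  rw [Term.vars]
  exact ⟨fun ⟨s, _, h⟩ => ⟨s.1, s.2, h⟩, fun ⟨s, hs, h⟩ => ⟨⟨s, hs⟩, List.mem_attach _ _, h⟩⟩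

theorem finite_vars (t : Term V Fn) : t.vars.Finite := by
  induction t using Term.ind with
  | var v => simp [Term.vars]
  | app f ts ih =>
    refine ((List.finite_toSet ts).biUnion fun s hs => ih s hs).subset fun x hx => ?_
    simpa using mem_vars_app.1 hx

theorem subst_congr {σ γ : Subst V Fn} {t : Term V Fn} (h : ∀ v ∈ t.vars, σ v = γ v) :
    t.subst σ = t.subst γ := by
  induction t using Term.ind with
  | var v => simpa using h v (by simp)
  | app f ts ih =>
    simp only [subst_app, app.injEq, true_and]
    exact List.map_congr_left fun s hs => ih s hs fun v hv => h v (mem_vars_app.2 ⟨s, hs, hv⟩)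

@[simp] theorem subst_var_self (t : Term V Fn) : t.subst Term.var = t := by
  induction t using Term.ind with
  | var v => simp
  | app f ts ih => simpa using List.map_congr_left ih

theorem subst_comp (σ γ : Subst V Fn) (t : Term V Fn) :
    t.subst (σ.comp γ) = (t.subst σ).subst γ := by
  induction t using Term.ind with
  | var v => simp [Subst.comp]
  | app f ts ih => simpa using List.map_congr_left ih

theorem mem_vars_subst {σ : Subst V Fn} {t : Term V Fn} {x : V} :
    x ∈ (t.subst σ).vars ↔ ∃ v ∈ t.vars, x ∈ (σ v).vars := by
  induction t using Term.ind with
  | var v => simp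
  | app f ts ih =>
    simp only [subst_app, mem_vars_app, List.mem_map]
    grind

def size : Term V Fn → ℕ
  | .var _ => 1
  | .app _ ts => 1 + (ts.attach.map fun s => size s.1).sum
  decreasing_by have := List.sizeOf_lt_of_mem s.2; simp at *; omega

@[simp] theorem size_var (v : V) : (Term.var v : Term V Fn).size = 1 := by rw [size]

@[simp] theorem size_app (f : Fn) (ts : List (Term V Fn)) :
    (Term.app f ts).size = 1 + (ts.map size).sum := by
  rw [size, List.attach_map_val (f := size)]

theorem size_lt_size_app {s : Term V Fn} {f : Fn} {ts : List (Term V Fn)} (hs : s ∈ ts) :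
    s.size < (Term.app f ts).size := by
  have := List.le_sum_of_mem (List.mem_map_of_mem (f := size) hs)
  simp only [size_app]
  omega

theorem size_le_size_subst {x : V} {θ : Subst V Fn} {t : Term V Fn} (hx : x ∈ t.vars) :
    (θ x).size ≤ (t.subst θ).size := by
  induction t using Term.ind with
  | var v => simp_all
  | app f ts ih =>
    obtain ⟨s, hs, hxs⟩ := mem_vars_app.1 hx
    rw [subst_app]
    exact (ih s hs hxs).trans (size_lt_size_app (List.mem_map_of_mem hs)).le

theorem subst_ne_of_mem_vars {x : V} {θ : Subst V Fn} {t : Term V Fn} (hx : x ∈ t.vars)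
    (ht : t ≠ .var x) : θ x ≠ t.subst θ := by
  cases t with
  | var v => simp_all
  | app f ts =>
    obtain ⟨s, hs, hxs⟩ := mem_vars_app.1 hx
    refine fun h => (size_le_size_subst (θ := θ) hxs).not_gt ?_
    rw [h, subst_app]
    exact size_lt_size_app (List.mem_map_of_mem hs)

end Term

namespace Subst

variable {V Fn : Type}

theorem var_comp (γ : Subst V Fn) : Subst.comp Term.var γ = γ := by
  funext v; simp [Subst.comp]

theorem comp_assoc (σ γ δ : Subst V Fn) : (σ.comp γ).comp δ = σ.comp (γ.comp δ) := by
  funext v; simp [Subst.comp, Term.subst_comp]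

/-- `IsMGU` for an arbitrary unification constraint `U`: `IsMGU σ ls` unfolds to
`IsMostGeneral (IsUnifier · ls) σ`. -/
def IsMostGeneral (U : Subst V Fn → Prop) (σ : Subst V Fn) : Prop :=
  U σ ∧ ∀ τ, U τ → ∃ γ, σ.comp γ = τ

theorem isMostGeneral_var {U : Subst V Fn → Prop} (h : ∀ τ, U τ) :
    IsMostGeneral U Term.var :=
  ⟨h _, fun τ _ => ⟨τ, var_comp τ⟩⟩

theorem IsMostGeneral.of_iff {U U' : Subst V Fn → Prop} {σ : Subst V Fn}
    (hσ : IsMostGeneral U σ) (h : ∀ τ, U τ ↔ U' τ) : IsMostGeneral U' σ := by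
  obtain rfl : U = U' := funext fun τ => propext (h τ)
  exact hσ

def Unifies (σ : Subst V Fn) (E : List (Term V Fn × Term V Fn)) : Prop :=
  ∀ p ∈ E, p.1.subst σ = p.2.subst σ

theorem unifies_cons {σ : Subst V Fn} {a b : Term V Fn} {E : List (Term V Fn × Term V Fn)} :
    σ.Unifies ((a, b) :: E) ↔ a.subst σ = b.subst σ ∧ σ.Unifies E :=
  List.forall_mem_cons

theorem unifies_swap_cons {σ : Subst V Fn} {a b : Term V Fn} {E : List (Term V Fn × Term V Fn)} :
    σ.Unifies ((a, b) :: E) ↔ σ.Unifies ((b, a) :: E) := by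
  simp only [unifies_cons, eq_comm]

theorem unifies_map_subst {σ ρ : Subst V Fn} {E : List (Term V Fn × Term V Fn)} :
    σ.Unifies (E.map (Prod.map (Term.subst ρ) (Term.subst ρ))) ↔ (ρ.comp σ).Unifies E := by
  simp only [Unifies, List.forall_mem_map, Prod.map, Term.subst_comp]

theorem unifies_append {σ : Subst V Fn} {E E' : List (Term V Fn × Term V Fn)} :
    σ.Unifies (E ++ E') ↔ σ.Unifies E ∧ σ.Unifies E' :=
  List.forall_mem_append

theorem unifies_zip {σ : Subst V Fn} {ts us : List (Term V Fn)} (hlen : ts.length = us.length) :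
    σ.Unifies (ts.zip us) ↔ ts.map (Term.subst σ) = us.map (Term.subst σ) := by
  rw [← List.forall₂_eq_eq_eq, List.forall₂_map_left_iff, List.forall₂_map_right_iff,
    List.forall₂_iff_zip]
  simp [Unifies, hlen]

section Single

variable [DecidableEq V]

def single (x : V) (t : Term V Fn) : Subst V Fn :=
  Function.update Term.var x t

@[simp] theorem single_self (x : V) (t : Term V Fn) : single x t x = t :=
  Function.update_self ..

theorem single_of_ne {x v : V} (t : Term V Fn) (h : v ≠ x) : single x t v = .var v :=
  Function.update_of_ne h ..

theorem subst_single_of_notMem {x : V} {s t : Term V Fn} (hx : x ∉ t.vars) :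
    t.subst (single x s) = t :=
  (Term.subst_congr fun _ hv => single_of_ne s (ne_of_mem_of_not_mem hv hx)).trans
    t.subst_var_self

theorem single_comp_eq_self_iff {θ : Subst V Fn} {x : V} {t : Term V Fn} :
    (single x t).comp θ = θ ↔ θ x = t.subst θ := by
  refine ⟨fun h => ?_, fun h => funext fun v => ?_⟩
  · simpa [Subst.comp] using (congrFun h x).symm
  · by_cases hv : v = x
    · subst hv; simp [Subst.comp, h]
    · simp [Subst.comp, single_of_ne t hv]

theorem isMostGeneral_unifies_var_cons {x : V} {t : Term V Fn}
    {E : List (Term V Fn × Term V Fn)} {σ : Subst V Fn} (hx : x ∉ t.vars)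
    (hσ : IsMostGeneral (Unifies · (E.map (Prod.map (Term.subst (single x t))
      (Term.subst (single x t))))) σ) :
    IsMostGeneral (Unifies · ((Term.var x, t) :: E)) ((single x t).comp σ) := by
  set ρ := single x t
  refine ⟨unifies_cons.2 ⟨?_, unifies_map_subst.1 hσ.1⟩, fun θ hθ => ?_⟩
  · simp [Term.subst_comp, subst_single_of_notMem hx, ρ, Subst.comp]
  obtain ⟨hhead, hE⟩ := unifies_cons.1 hθ
  have hρθ : ρ.comp θ = θ := single_comp_eq_self_iff.2 (by simpa using hhead)
  obtain ⟨γ, hγ⟩ := hσ.2 θ (unifies_map_subst.2 (by rwa [hρθ]))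
  exact ⟨γ, by rw [comp_assoc, hγ, hρθ]⟩

end Single

end Subst

section Unification

variable {V Fn : Type}

def eqnVars (E : List (Term V Fn × Term V Fn)) : Set V :=
  {x | ∃ p ∈ E, x ∈ p.1.vars ∨ x ∈ p.2.vars}

def eqnSize (E : List (Term V Fn × Term V Fn)) : ℕ :=
  (E.map fun p => p.1.size + p.2.size).sum

@[simp] theorem mem_eqnVars_cons {x : V} {a b : Term V Fn} {E : List (Term V Fn × Term V Fn)} :
    x ∈ eqnVars ((a, b) :: E) ↔ x ∈ a.vars ∨ x ∈ b.vars ∨ x ∈ eqnVars E := by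
  simp [eqnVars, or_assoc]

theorem finite_eqnVars (E : List (Term V Fn × Term V Fn)) : (eqnVars E).Finite :=
  ((List.finite_toSet E).biUnion fun p _ => p.1.finite_vars.union p.2.finite_vars).subset
    fun _ ⟨_, hp, hx⟩ => Set.mem_biUnion hp hx

@[simp] theorem eqnSize_cons (a b : Term V Fn) (E : List (Term V Fn × Term V Fn)) :
    eqnSize ((a, b) :: E) = a.size + b.size + eqnSize E := by
  simp [eqnSize]

theorem eqnSize_zip_append {ts us : List (Term V Fn)} (E : List (Term V Fn × Term V Fn))
    (hlen : ts.length = us.length) :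
    eqnSize (ts.zip us ++ E) = (ts.map Term.size).sum + (us.map Term.size).sum + eqnSize E := by
  induction ts generalizing us with
  | nil => simp [List.length_eq_zero_iff.1 hlen.symm]
  | cons t ts ih =>
    cases us with
    | nil => simp at hlen
    | cons u us =>
      simp only [List.zip_cons_cons, List.cons_append, eqnSize_cons, ih (by simpa using hlen),
        List.map_cons, List.sum_cons]
      omega

theorem eqnVars_zip_append_subset (f g : Fn) (ts us : List (Term V Fn))
    (E : List (Term V Fn × Term V Fn)) :
    eqnVars (ts.zip us ++ E) ⊆ eqnVars ((.app f ts, .app g us) :: E) := by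
  rintro x ⟨⟨a, b⟩, hp, hx⟩
  rcases List.mem_append.1 hp with hp | hp
  · have hab := List.of_mem_zip hp
    simp only [mem_eqnVars_cons, Term.mem_vars_app]
    exact hx.imp (⟨a, hab.1, ·⟩) (fun hx => Or.inl ⟨b, hab.2, hx⟩)
  · exact mem_eqnVars_cons.2 (Or.inr (Or.inr ⟨_, hp, hx⟩))

theorem ncard_eqnVars_map_subst_single_lt [DecidableEq V] {x : V} {t : Term V Fn}
    {E E' : List (Term V Fn × Term V Fn)} (hx : x ∉ t.vars) (hxE' : x ∈ eqnVars E')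
    (hsub : t.vars ∪ eqnVars E ⊆ eqnVars E') :
    (eqnVars (E.map (Prod.map (Term.subst (Subst.single x t))
      (Term.subst (Subst.single x t))))).ncard < (eqnVars E').ncard := by
  have hvars : ∀ s : Term V Fn, ∀ v ∈ (s.subst (Subst.single x t)).vars,
      v ≠ x ∧ (v ∈ t.vars ∨ v ∈ s.vars) := by
    intro s v hv
    obtain ⟨w, hw, hvw⟩ := Term.mem_vars_subst.1 hv
    by_cases hwx : w = x
    · subst hwx
      simp only [Subst.single_self] at hvw
      exact ⟨ne_of_mem_of_not_mem hvw hx, Or.inl hvw⟩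
    · rw [Subst.single_of_ne t hwx, Term.mem_vars_var] at hvw
      exact ⟨hvw ▸ hwx, Or.inr (hvw ▸ hw)⟩
  refine Set.ncard_lt_ncard ((Set.ssubset_iff_of_subset ?_).2 ⟨x, hxE', ?_⟩) (finite_eqnVars E')
  · rintro v ⟨p, hp, hv⟩
    obtain ⟨⟨a, b⟩, hab, rfl⟩ := List.mem_map.1 hp
    refine hsub ?_
    rcases hv with hv | hv
    · exact (hvars a v hv).2.imp id fun h => ⟨_, hab, Or.inl h⟩
    · exact (hvars b v hv).2.imp id fun h => ⟨_, hab, Or.inr h⟩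
  · rintro ⟨p, hp, hv⟩
    obtain ⟨⟨a, b⟩, -, rfl⟩ := List.mem_map.1 hp
    exact hv.elim (fun h => (hvars a x h).1 rfl) (fun h => (hvars b x h).1 rfl)

end Unification

namespace Subst

variable {V Fn : Type}

/-- Martelli–Montanari unification: variable elimination lowers the number of variables of the
problem, decomposition and deletion keep it and lower the total size. -/
theorem exists_isMostGeneral_unifies :
    ∀ (E : List (Term V Fn × Term V Fn)) (θ : Subst V Fn), θ.Unifies E →
      ∃ σ, IsMostGeneral (Unifies · E) σ
  | [], _, _ => ⟨_, isMostGeneral_var fun _ _ h => absurd h List.not_mem_nil⟩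
  | (.var x, t) :: E, θ, hθ => by
    classical
    obtain ⟨hxt, hE⟩ := unifies_cons.1 hθ
    rw [Term.subst_var] at hxt
    by_cases hdel : t = .var x
    · subst hdel
      obtain ⟨σ, hσ⟩ := exists_isMostGeneral_unifies E θ hE
      exact ⟨σ, hσ.of_iff fun τ => by simp [unifies_cons]⟩
    have hx : x ∉ t.vars := fun hx => Term.subst_ne_of_mem_vars hx hdel hxt
    obtain ⟨σ, hσ⟩ := exists_isMostGeneral_unifies (E.map (Prod.map (Term.subst (single x t))
      (Term.subst (single x t)))) θ (by rwa [unifies_map_subst, single_comp_eq_self_iff.2 hxt])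
    exact ⟨_, isMostGeneral_unifies_var_cons hx hσ⟩
  | (.app f ts, .var x) :: E, θ, hθ => by
    classical
    obtain ⟨hxt, hE⟩ := unifies_cons.1 (unifies_swap_cons.1 hθ)
    rw [Term.subst_var] at hxt
    have hx : x ∉ (Term.app f ts).vars := fun hx => Term.subst_ne_of_mem_vars hx (by simp) hxt
    obtain ⟨σ, hσ⟩ := exists_isMostGeneral_unifies (E.map (Prod.map
      (Term.subst (single x (.app f ts))) (Term.subst (single x (.app f ts))))) θ
      (by rwa [unifies_map_subst, single_comp_eq_self_iff.2 hxt])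
    exact ⟨_, (isMostGeneral_unifies_var_cons hx hσ).of_iff fun τ => unifies_swap_cons⟩
  | (.app f ts, .app g us) :: E, θ, hθ => by
    obtain ⟨hargs, hE⟩ := unifies_cons.1 hθ
    simp only [Term.subst_app, Term.app.injEq] at hargs
    obtain ⟨rfl, hargs⟩ := hargs
    have hlen : ts.length = us.length := by simpa using congrArg List.length hargs
    obtain ⟨σ, hσ⟩ := exists_isMostGeneral_unifies (ts.zip us ++ E) θ
      (unifies_append.2 ⟨(unifies_zip hlen).2 hargs, hE⟩)
    exact ⟨σ, hσ.of_iff fun τ => by simp [unifies_cons, unifies_append, unifies_zip hlen]⟩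
termination_by E => ((eqnVars E).ncard, eqnSize E)
decreasing_by
  · refine Prod.lex_def.2 ((Set.ncard_le_ncard ?_ (finite_eqnVars _)).lt_or_eq.imp_right
      (⟨·, by simp⟩))
    exact fun v hv => mem_eqnVars_cons.2 (Or.inr (Or.inr hv))
  · classical
    refine Prod.Lex.left _ _ (ncard_eqnVars_map_subst_single_lt hx (by simp) ?_)
    exact fun v hv => mem_eqnVars_cons.2 (Or.inr hv)
  · classical
    refine Prod.Lex.left _ _ (ncard_eqnVars_map_subst_single_lt hx (by simp) ?_)
    exact fun v hv => mem_eqnVars_cons.2 (hv.imp_right Or.inr)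
  · refine Prod.lex_def.2 ((Set.ncard_le_ncard (eqnVars_zip_append_subset f g ts us E)
      (finite_eqnVars _)).lt_or_eq.imp_right (⟨·, ?_⟩))
    simp only [eqnSize_zip_append E hlen, eqnSize_cons, Term.size_app]
    omega

end Subst

section Clauses

variable {V Fn P : Type}

theorem Lit.subst_eq_subst_iff {σ : Subst V Fn} {l m : Lit V Fn P} :
    l.subst σ = m.subst σ ↔ l.pol = m.pol ∧ l.atom.pred = m.atom.pred ∧
      l.atom.args.map (Term.subst σ) = m.atom.args.map (Term.subst σ) := by
  obtain ⟨_, _, _⟩ := l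
  obtain ⟨_, _, _⟩ := m
  simp [Lit.subst, Atom.subst]

theorem isUnifier_cons_iff {σ : Subst V Fn} {L : Lit V Fn P} {ls : List (Lit V Fn P)} :
    IsUnifier σ (L :: ls) ↔ ∀ l ∈ ls, L.subst σ = l.subst σ := by
  refine ⟨fun h l hl => h L List.mem_cons_self l (List.mem_cons_of_mem _ hl), fun h => ?_⟩
  have hall : ∀ l ∈ L :: ls, l.subst σ = L.subst σ :=
    List.forall_mem_cons.2 ⟨rfl, fun l hl => (h l hl).symm⟩
  exact fun l₁ h₁ l₂ h₂ => (hall l₁ h₁).trans (hall l₂ h₂).symm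

/-- Unifying literals with the same sign and predicate is unifying their argument lists. -/
theorem exists_isMGU_of_isUnifier {L : Lit V Fn P} {ls : List (Lit V Fn P)} {θ : Subst V Fn}
    (hθ : IsUnifier θ (L :: ls)) : ∃ σ, IsMGU σ (L :: ls) := by
  have hshape : ∀ l ∈ ls, L.pol = l.pol ∧ L.atom.pred = l.atom.pred ∧
      L.atom.args.length = l.atom.args.length := fun l hl => by
    obtain ⟨hpol, hpred, hargs⟩ := Lit.subst_eq_subst_iff.1 (isUnifier_cons_iff.1 hθ l hl)
    exact ⟨hpol, hpred, by simpa using congrArg List.length hargs⟩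
  have hiff : ∀ τ : Subst V Fn,
      τ.Unifies (ls.flatMap fun l => L.atom.args.zip l.atom.args) ↔ IsUnifier τ (L :: ls) :=
      fun τ => by
    rw [isUnifier_cons_iff, Subst.Unifies, List.forall_mem_flatMap]
    refine forall₂_congr fun l hl => ?_
    obtain ⟨hpol, hpred, hlen⟩ := hshape l hl
    rw [Lit.subst_eq_subst_iff, ← Subst.unifies_zip hlen]
    simp [Subst.Unifies, hpol, hpred]
  obtain ⟨σ, hσ⟩ := Subst.exists_isMostGeneral_unifies _ θ ((hiff θ).2 hθ)
  exact ⟨σ, hσ.of_iff hiff⟩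

theorem Lit.subst_congr {σ γ : Subst V Fn} {l : Lit V Fn P} (h : ∀ v ∈ l.vars, σ v = γ v) :
    l.subst σ = l.subst γ := by
  simp only [Lit.subst, Atom.subst, Lit.mk.injEq, Atom.mk.injEq, true_and]
  exact List.map_congr_left fun t ht => Term.subst_congr fun v hv => h v ⟨t, ht, hv⟩

theorem Clause.subst_congr {σ γ : Subst V Fn} {C : Clause V Fn P}
    (h : ∀ v ∈ C.vars, σ v = γ v) : C.subst σ = C.subst γ :=
  Multiset.map_congr rfl fun l hl => Lit.subst_congr fun v hv => h v ⟨l, hl, hv⟩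

theorem Clause.vars_mono {C D : Clause V Fn P} (h : C ≤ D) : C.vars ⊆ D.vars :=
  fun _ ⟨l, hl, hv⟩ => ⟨l, Multiset.mem_of_le h hl, hv⟩

theorem Clause.subst_comp (σ γ : Subst V Fn) (C : Clause V Fn P) :
    C.subst (σ.comp γ) = (C.subst σ).subst γ := by
  simp only [Clause.subst, Multiset.map_map]
  refine Multiset.map_congr rfl fun l _ => ?_
  simp [Lit.subst, Atom.subst, Term.subst_comp]

theorem Clause.subst_add (σ : Subst V Fn) (C D : Clause V Fn P) :
    (C + D).subst σ = C.subst σ + D.subst σ :=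
  Multiset.map_add ..

theorem Clause.subst_cons (σ : Subst V Fn) (l : Lit V Fn P) (C : Clause V Fn P) :
    Clause.subst σ (l ::ₘ C) = l.subst σ ::ₘ C.subst σ :=
  Multiset.map_cons ..

theorem Clause.ValidEF.subst {C : Clause V Fn P} (h : C.ValidEF) (σ : Subst V Fn) :
    (C.subst σ).ValidEF :=
  let ⟨A, hpos, hneg⟩ := h
  ⟨A.subst σ, Multiset.mem_map_of_mem _ hpos, Multiset.mem_map_of_mem _ hneg⟩

theorem Clause.ValidEF.satC {C : Clause V Fn P} (h : C.ValidEF) (α : PAssign V Fn P) :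
    satC α C := by
  obtain ⟨A, hpos, hneg⟩ := h
  cases hA : α A
  · exact ⟨_, hneg, hA⟩
  · exact ⟨_, hpos, hA⟩

theorem satC_cons_iff {α : PAssign V Fn P} {l : Lit V Fn P} {C : Clause V Fn P} :
    satC α (l ::ₘ C) ↔ litTrue α l ∨ satC α C := by
  simp [satC]

theorem compl_eq_of_not_satC_flipAtom {α : PAssign V Fn P} {M l : Lit V Fn P}
    {E : Clause V Fn P} (hM : ¬ litTrue α M) (hflip : ¬ satC (flipAtom α M.atom) E)
    (hl : l ∈ E) (hlt : litTrue α l) : l.compl = M := by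
  by_cases hatom : l.atom = M.atom
  · obtain ⟨p, A⟩ := l
    obtain ⟨q, B⟩ := M
    simp only [litTrue, Lit.compl, Lit.mk.injEq] at hM hlt hatom ⊢
    subst hatom
    cases p <;> cases q <;> simp_all
  · exact (hflip ⟨l, hl, by simpa [litTrue, flipAtom, hatom] using hlt⟩).elim

/-- As `C` and `D` share no variables, `lam` and `τ` glue to one unifier of `L` and the
complements of `Ns`; it factors through an mgu `σ`, so the instance `C'λ ∨ Drτ` of the valid
resolvent `C'σ ∨ Drσ` is valid. -/
theorem BlockedEF.validEF_subst_add_subst {F : Set (Clause V Fn P)} {L : Lit V Fn P}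
    {C' D Ns Dr : Clause V Fn P} {lam τ : Subst V Fn} (hbl : BlockedEF L C' F) (hD : D ∈ F)
    (hDne : D ≠ L ::ₘ C') (hdisj : Clause.vars (L ::ₘ C') ∩ D.vars = ∅)
    (hsplit : Ns + Dr = D) (hNs : Ns ≠ 0)
    (hres : ∀ N ∈ Ns, (N.subst τ).compl = L.subst lam) :
    (C'.subst lam + Dr.subst τ).ValidEF := by
  classical
  set σ₀ : Subst V Fn := (Clause.vars (L ::ₘ C')).piecewise lam τ
  have hσ₀C : ∀ v ∈ Clause.vars (L ::ₘ C'), σ₀ v = lam v := fun v hv =>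
    Set.piecewise_eq_of_mem _ _ _ hv
  have hσ₀D : ∀ v ∈ D.vars, σ₀ v = τ v := fun v hv =>
    Set.piecewise_eq_of_notMem _ _ _ fun hC => (hdisj ▸ ⟨hC, hv⟩ : v ∈ (∅ : Set V))
  have hunif : IsUnifier σ₀ (L :: (Ns.map Lit.compl).toList) := by
    refine isUnifier_cons_iff.2 fun l hl => ?_
    obtain ⟨N, hN, rfl⟩ := Multiset.mem_map.1 (Multiset.mem_toList.1 hl)
    have hND : N ∈ D := hsplit ▸ Multiset.mem_add.2 (Or.inl hN)
    rw [Lit.subst_congr fun v hv => hσ₀C v ⟨L, Multiset.mem_cons_self _ _, hv⟩,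
      Lit.subst_congr (l := N.compl) fun v hv => hσ₀D v ⟨N, hND, hv⟩, ← hres N hN]
    rfl
  obtain ⟨σ, hσ⟩ := exists_isMGU_of_isUnifier hunif
  obtain ⟨γ, hγ⟩ := hσ.2 σ₀ hunif
  have hval := (hbl D hD hDne Ns Dr hsplit hNs σ hσ).subst γ
  rwa [Clause.subst_add, ← Clause.subst_comp, ← Clause.subst_comp, hγ,
    Clause.subst_congr fun v hv => hσ₀C v (Clause.vars_mono (Multiset.le_cons_self _ _) hv),
    Clause.subst_congr fun v hv =>
      hσ₀D v (Clause.vars_mono (hsplit ▸ Multiset.le_add_left _ _) hv)]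
    at hval

end Clauses

theorem stmt5_general {V Fn P : Type} (F : Set (Clause V Fn P)) (L : Lit V Fn P) (C' : Clause V Fn P)
    (hdisj : ∀ D ∈ F, D ≠ L ::ₘ C' → Clause.vars (L ::ₘ C') ∩ Clause.vars D = ∅)
    (hbl : BlockedEF L C' F)
    (α : PAssign V Fn P) (lam : Subst V Fn)
    (hfal : ¬ satC α (Clause.subst lam (L ::ₘ C'))) :
    ∀ D ∈ F, D ≠ L ::ₘ C' → ∀ τ : Subst V Fn, (Clause.subst τ D).IsGround →
      satC α (Clause.subst τ D) → satC (flipAtom α (L.subst lam).atom) (Clause.subst τ D) := by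
  classical
  intro D hD hDne τ _ hsat
  by_contra hflip
  obtain ⟨hLlam, hC'lam⟩ := not_or.1 (by rwa [Clause.subst_cons, satC_cons_iff] at hfal)
  have hcompl : ∀ N ∈ D, litTrue α (N.subst τ) → (N.subst τ).compl = L.subst lam :=
    fun N hN => compl_eq_of_not_satC_flipAtom hLlam hflip (Multiset.mem_map_of_mem _ hN)
  obtain ⟨_, hl, hlt⟩ := hsat
  obtain ⟨N₀, hN₀, rfl⟩ := Multiset.mem_map.1 hl
  set Ns := D.filter fun N => (N.subst τ).compl = L.subst lam
  have hNs : Ns ≠ 0 := fun h0 =>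
    Multiset.notMem_zero N₀ (h0 ▸ Multiset.mem_filter.2 ⟨hN₀, hcompl N₀ hN₀ hlt⟩)
  obtain ⟨l, hl, hlt⟩ := (hbl.validEF_subst_add_subst hD hDne (hdisj D hD hDne)
    (Multiset.filter_add_not _ D) hNs fun N hN => (Multiset.mem_filter.1 hN).2).satC α
  rcases Multiset.mem_add.1 hl with hl | hl
  · exact hC'lam ⟨l, hl, hlt⟩
  · obtain ⟨N, hN, rfl⟩ := Multiset.mem_map.1 hl
    obtain ⟨hND, hNτ⟩ := Multiset.mem_filter.1 hN
    exact hNτ (hcompl N hND hlt)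

/-- If `C = L ∨ C'` is blocked by `L` in `F` and `α` falsifies the ground instance `Cλ`,
then flipping the atom of `Lλ` preserves satisfaction of every ground instance of every
clause of `F \ {C}` that `α` satisfies. -/
theorem stmt5 {V Fn P : Type} (F : Set (Clause V Fn P)) (L : Lit V Fn P) (C' : Clause V Fn P)
    (hdisj : ∀ D ∈ F, D ≠ L ::ₘ C' → Clause.vars (L ::ₘ C') ∩ Clause.vars D = ∅)
    (hbl : BlockedEF L C' F)
    (α : PAssign V Fn P) (lam : Subst V Fn)
    (hground : (Clause.subst lam (L ::ₘ C')).IsGround)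
    (hfal : ¬ satC α (Clause.subst lam (L ::ₘ C'))) :
    ∀ D ∈ F, D ≠ L ::ₘ C' → ∀ τ : Subst V Fn, (Clause.subst τ D).IsGround →
      satC α (Clause.subst τ D) → satC (flipAtom α (L.subst lam).atom) (Clause.subst τ D) :=
  stmt5_general F L C' hdisj hbl α lam hfal
end
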